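/- arXiv:2208.11835 — 3 statements merged into one kernel-verified Lean document; each statement's English description precedes it below -/
import Mathlib

section
/- Let m and m' be two incentive-compatible mechanisms that induce the same indirect utility U, let g : S → ℝⁿ be continuous, κ > 0, and let F be a Borel probability measure on S that is absolutely continuous with respect to Lebesgue measure. Then the principal's expected payoffs coincide: ∫_S ∫ (⟪a,g(s)⟫ + κ·b(a)) dm(s)(a) dF(s) = ∫_S ∫ (⟪a,g(s)⟫ + κ·b(a)) dm'(s)(a) dF(s). -/
open MeasureTheory Filter
open scoped RealInnerProductSpace

noncomputable section

/-- The first-best payoff `h(s) = sup_{a ∈ ℝⁿ} (⟪a,s⟫ + b(a))`. -/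
def firstBest {n : ℕ} (b : EuclideanSpace ℝ (Fin n) → ℝ)
    (s : EuclideanSpace ℝ (Fin n)) : ℝ :=
  sSup (Set.range fun a : EuclideanSpace ℝ (Fin n) => ⟪a, s⟫ + b a)

/-- A mechanism: a measurable map from types to Borel probability measures on ℝⁿ, with
finite first moments, and with `b` integrable. -/
def IsMechanism {n : ℕ} (b : EuclideanSpace ℝ (Fin n) → ℝ)
    (S : Set (EuclideanSpace ℝ (Fin n)))
    (m : EuclideanSpace ℝ (Fin n) → Measure (EuclideanSpace ℝ (Fin n))) : Prop :=
  (∀ A : Set (EuclideanSpace ℝ (Fin n)), MeasurableSet A → Measurable fun s => m s A) ∧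
  ∀ s ∈ S, IsProbabilityMeasure (m s) ∧
    Integrable (fun a => a) (m s) ∧ Integrable b (m s)

/-- Agent's payoff in state `s` from reporting `s'`:
`u_A(m(s'),s) = ⟪β(s'), s⟫ + ∫ b dm(s')`, where `β(s') = ∫ a dm(s')(a)`. -/
def agentPayoff {n : ℕ} (b : EuclideanSpace ℝ (Fin n) → ℝ)
    (m : EuclideanSpace ℝ (Fin n) → Measure (EuclideanSpace ℝ (Fin n)))
    (s' s : EuclideanSpace ℝ (Fin n)) : ℝ :=
  ⟪∫ a, a ∂(m s'), s⟫ + ∫ a, b a ∂(m s')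

/-- Incentive compatibility: truth-telling is optimal for every type in `S`. -/
def IncentiveCompatible {n : ℕ} (b : EuclideanSpace ℝ (Fin n) → ℝ)
    (S : Set (EuclideanSpace ℝ (Fin n)))
    (m : EuclideanSpace ℝ (Fin n) → Measure (EuclideanSpace ℝ (Fin n))) : Prop :=
  ∀ s ∈ S, ∀ s' ∈ S, agentPayoff b m s' s ≤ agentPayoff b m s s

/-- The indirect utility of a mechanism: `U(s) = sup_{s' ∈ S} u_A(m(s'), s)`. -/
def indirectUtility {n : ℕ} (b : EuclideanSpace ℝ (Fin n) → ℝ)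
    (S : Set (EuclideanSpace ℝ (Fin n)))
    (m : EuclideanSpace ℝ (Fin n) → Measure (EuclideanSpace ℝ (Fin n)))
    (s : EuclideanSpace ℝ (Fin n)) : ℝ :=
  sSup ((fun s' => agentPayoff b m s' s) '' S)

/- Under incentive compatibility the barycenter `β(s)` of `m(s)` is a subgradient at `s` of the
indirect utility `U`, since `U(t) ≥ u_A(m(s), t) = U(s) + ⟪β(s), t - s⟫`; in particular `U` is
convex on `S`. A convex function is differentiable Lebesgue-a.e. on the interior of `S` (it is
locally Lipschitz there, so Rademacher applies), and the frontier of a convex set is Lebesgue-null.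
Where `U` is differentiable its only subgradient is `∇U(s)`, so `β(s) = ∇U(s)` and
`∫ b dm(s) = U(s) - ⟪β(s), s⟫` are determined by `U`. The principal's payoff from `m(s)` depends
on `m(s)` only through `β(s)` and `∫ b dm(s)`, so the two mechanisms agree `F`-a.e. on `S`. -/

open Topology

section Subgradient

variable {E : Type*} [NormedAddCommGroup E] [InnerProductSpace ℝ E]

lemma ConvexOn.of_le_add_inner {S : Set E} (hS : Convex ℝ S) {f : E → ℝ} {β : E → E}
    (hβ : ∀ x ∈ S, ∀ y ∈ S, f x + ⟪β x, y - x⟫ ≤ f y) : ConvexOn ℝ S f := by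
  refine ⟨hS, fun x hx y hy a c ha hc hac => ?_⟩
  set z := a • x + c • y
  have hz : z ∈ S := hS hx hy ha hc hac
  have hzx := hβ z hz x hx
  have hzy := hβ z hz y hy
  have hcomb : a • (x - z) + c • (y - z) = 0 :=
    calc a • (x - z) + c • (y - z) = (a • x + c • y) - (a + c) • z := by module
      _ = 0 := by rw [hac, one_smul, sub_self]
  have hinner : a * ⟪β z, x - z⟫ + c * ⟪β z, y - z⟫ = 0 := by
    rw [← real_inner_smul_right, ← real_inner_smul_right, ← inner_add_right, hcomb,
      inner_zero_right]
  simp only [smul_eq_mul]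
  linear_combination a * hzx + c * hzy - hinner - f z * hac

lemma fderiv_eq_innerSL_of_eventually_le {f : E → ℝ} {x β : E} (hf : DifferentiableAt ℝ f x)
    (hβ : ∀ᶠ y in 𝓝 x, f x + ⟪β, y - x⟫ ≤ f y) : fderiv ℝ f x = innerSL ℝ β := by
  have hmin : IsLocalMin (fun y => f y - ⟪β, y⟫) x := by
    filter_upwards [hβ] with y hy
    rw [inner_sub_right] at hy
    linarith
  have hderiv : HasFDerivAt (fun y => f y - ⟪β, y⟫) (fderiv ℝ f x - innerSL ℝ β) x :=
    hf.hasFDerivAt.sub (innerSL ℝ β).hasFDerivAt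
  exact sub_eq_zero.mp (hmin.hasFDerivAt_eq_zero hderiv)

lemma eq_of_eventually_le_add_inner {f : E → ℝ} {x β₁ β₂ : E} (hf : DifferentiableAt ℝ f x)
    (h₁ : ∀ᶠ y in 𝓝 x, f x + ⟪β₁, y - x⟫ ≤ f y)
    (h₂ : ∀ᶠ y in 𝓝 x, f x + ⟪β₂, y - x⟫ ≤ f y) : β₁ = β₂ :=
  have h := (fderiv_eq_innerSL_of_eventually_le hf h₁).symm.trans
    (fderiv_eq_innerSL_of_eventually_le hf h₂)
  ext_inner_right ℝ fun v => by simpa using DFunLike.congr_fun h v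

end Subgradient

section Integral

variable {E : Type*} [NormedAddCommGroup E] [InnerProductSpace ℝ E] [CompleteSpace E]
  [MeasurableSpace E]

lemma integral_inner_add_mul {b : E → ℝ} {μ : Measure E}
    (hid : Integrable (fun a => a) μ) (hb : Integrable b μ) (x : E) (κ : ℝ) :
    ∫ a, (⟪a, x⟫ + κ * b a) ∂μ = ⟪∫ a, a ∂μ, x⟫ + κ * ∫ a, b a ∂μ := by
  have hinner : Integrable (fun a => ⟪a, x⟫) μ := by
    simpa only [innerSL_apply_apply, real_inner_comm x] using (innerSL ℝ x).integrable_comp hid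
  rw [integral_add hinner (hb.const_mul κ), integral_const_mul, real_inner_comm,
    ← integral_inner hid x]
  simp only [real_inner_comm x]

end Integral

section AeDifferentiable

variable {E : Type*} [NormedAddCommGroup E] [NormedSpace ℝ E] [FiniteDimensional ℝ E]
  [MeasurableSpace E] [BorelSpace E] (μ : Measure E) [μ.IsAddHaarMeasure]

lemma LocallyLipschitzOn.ae_differentiableAt_of_mem {F : Type*} [NormedAddCommGroup F]
    [NormedSpace ℝ F] [FiniteDimensional ℝ F] {f : E → F} {s : Set E} (hs : IsOpen s)
    (hf : LocallyLipschitzOn s f) : ∀ᵐ x ∂μ, x ∈ s → DifferentiableAt ℝ f x := by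
  choose! K t ht hK using fun x (hx : x ∈ s) => hf hx
  have ht_nhds : ∀ x ∈ s, interior (t x) ∈ 𝓝 x := fun x hx =>
    interior_mem_nhds.mpr (hs.nhdsWithin_eq hx ▸ ht x hx)
  obtain ⟨c, hcs, hc, hcover⟩ := TopologicalSpace.countable_cover_nhdsWithin
    fun x hx => mem_nhdsWithin_of_mem_nhds (ht_nhds x hx)
  have hae : ∀ x ∈ c, ∀ᵐ y ∂μ, y ∈ interior (t x) → DifferentiableAt ℝ f y := fun x hx => by
    have hlip := (hK x (hcs hx)).mono interior_subset
    filter_upwards [hlip.ae_differentiableWithinAt_of_mem (μ := μ)] with y hy hyt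
    exact (hy hyt).differentiableAt (isOpen_interior.mem_nhds hyt)
  filter_upwards [(ae_ball_iff hc).mpr hae] with y hy hys
  obtain ⟨x, hxc, hyx⟩ := Set.mem_iUnion₂.mp (hcover hys)
  exact hy x hxc hyx

lemma ConvexOn.ae_differentiableAt_of_mem_interior {f : E → ℝ} {S : Set E}
    (hf : ConvexOn ℝ S f) : ∀ᵐ x ∂μ, x ∈ interior S → DifferentiableAt ℝ f x :=
  hf.locallyLipschitzOn_interior.ae_differentiableAt_of_mem μ isOpen_interior

lemma Convex.ae_mem_interior {S : Set E} (hS : Convex ℝ S) :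
    ∀ᵐ x ∂μ, x ∈ S → x ∈ interior S := by
  filter_upwards [measure_eq_zero_iff_ae_notMem.mp (hS.addHaar_frontier μ)] with x hx hxS
  by_contra h
  exact hx ⟨subset_closure hxS, h⟩

end AeDifferentiable

section Mechanism

variable {n : ℕ} {b : EuclideanSpace ℝ (Fin n) → ℝ} {S : Set (EuclideanSpace ℝ (Fin n))}
  {m m' : EuclideanSpace ℝ (Fin n) → Measure (EuclideanSpace ℝ (Fin n))}

lemma agentPayoff_eq_add_inner (s' s t : EuclideanSpace ℝ (Fin n)) :
    agentPayoff b m s' t = agentPayoff b m s' s + ⟪∫ a, a ∂(m s'), t - s⟫ := by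
  simp only [agentPayoff, inner_sub_right]
  ring

namespace IncentiveCompatible

lemma indirectUtility_eq (hIC : IncentiveCompatible b S m) {s : EuclideanSpace ℝ (Fin n)}
    (hs : s ∈ S) : indirectUtility b S m s = agentPayoff b m s s :=
  IsGreatest.csSup_eq ⟨Set.mem_image_of_mem _ hs, Set.forall_mem_image.mpr (hIC s hs)⟩

lemma indirectUtility_add_inner_le (hIC : IncentiveCompatible b S m)
    {s t : EuclideanSpace ℝ (Fin n)} (hs : s ∈ S) (ht : t ∈ S) :
    indirectUtility b S m s + ⟪∫ a, a ∂(m s), t - s⟫ ≤ indirectUtility b S m t := by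
  rw [hIC.indirectUtility_eq hs, hIC.indirectUtility_eq ht, ← agentPayoff_eq_add_inner]
  exact hIC t ht s hs

lemma convexOn_indirectUtility (hIC : IncentiveCompatible b S m) (hS : Convex ℝ S) :
    ConvexOn ℝ S (indirectUtility b S m) :=
  .of_le_add_inner hS fun _ hs _ ht => hIC.indirectUtility_add_inner_le hs ht

lemma integral_id_eq_of_differentiableAt (hIC : IncentiveCompatible b S m)
    (hIC' : IncentiveCompatible b S m') (hU : indirectUtility b S m = indirectUtility b S m')
    {s : EuclideanSpace ℝ (Fin n)} (hs : S ∈ 𝓝 s)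
    (hd : DifferentiableAt ℝ (indirectUtility b S m) s) :
    ∫ a, a ∂(m s) = ∫ a, a ∂(m' s) := by
  refine eq_of_eventually_le_add_inner hd ?_ ?_ <;> filter_upwards [hs] with t ht
  · exact hIC.indirectUtility_add_inner_le (mem_of_mem_nhds hs) ht
  · exact hU ▸ hIC'.indirectUtility_add_inner_le (mem_of_mem_nhds hs) ht

lemma integral_eq_of_integral_id_eq (hIC : IncentiveCompatible b S m)
    (hIC' : IncentiveCompatible b S m') (hU : indirectUtility b S m = indirectUtility b S m')
    {s : EuclideanSpace ℝ (Fin n)} (hs : s ∈ S) (hid : ∫ a, a ∂(m s) = ∫ a, a ∂(m' s)) :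
    ∫ a, b a ∂(m s) = ∫ a, b a ∂(m' s) := by
  have h := congrFun hU s
  rw [hIC.indirectUtility_eq hs, hIC'.indirectUtility_eq hs, agentPayoff, agentPayoff, hid] at h
  exact add_left_cancel h

end IncentiveCompatible

end Mechanism

theorem stmt_5_general {n : ℕ} (b : EuclideanSpace ℝ (Fin n) → ℝ)
    (S : Set (EuclideanSpace ℝ (Fin n)))
    (hSconv : Convex ℝ S)
    (g : EuclideanSpace ℝ (Fin n) → EuclideanSpace ℝ (Fin n))
    (κ : ℝ)
    (m m' : EuclideanSpace ℝ (Fin n) → Measure (EuclideanSpace ℝ (Fin n)))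
    (hm : IsMechanism b S m) (hIC : IncentiveCompatible b S m)
    (hm' : IsMechanism b S m') (hIC' : IncentiveCompatible b S m')
    (hsameU : indirectUtility b S m = indirectUtility b S m')
    (F : Measure (EuclideanSpace ℝ (Fin n)))
    (hFac : F ≪ MeasureTheory.volume) :
    (∫ s in S, (∫ a, (⟪a, g s⟫ + κ * b a) ∂(m s)) ∂F)
      = ∫ s in S, (∫ a, (⟪a, g s⟫ + κ * b a) ∂(m' s)) ∂F := by
  have hae : ∀ᵐ s ∂volume, s ∈ S →
      s ∈ interior S ∧ DifferentiableAt ℝ (indirectUtility b S m) s := by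
    filter_upwards [hSconv.ae_mem_interior volume,
      (hIC.convexOn_indirectUtility hSconv).ae_differentiableAt_of_mem_interior volume]
      with s hint hdiff hs
    exact ⟨hint hs, hdiff (hint hs)⟩
  refine setIntegral_congr_ae₀ ((hSconv.nullMeasurableSet volume).mono_ac hFac) ?_
  filter_upwards [hFac.ae_le hae] with s hs hsS
  obtain ⟨-, hid, hb⟩ := hm.2 s hsS
  obtain ⟨-, hid', hb'⟩ := hm'.2 s hsS
  have hbary := hIC.integral_id_eq_of_differentiableAt hIC' hsameU
    (mem_interior_iff_mem_nhds.mp (hs hsS).1) (hs hsS).2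
  rw [integral_inner_add_mul hid hb, integral_inner_add_mul hid' hb', hbary,
    hIC.integral_eq_of_integral_id_eq hIC' hsameU hsS hbary]

/-- Two incentive-compatible mechanisms inducing the same indirect utility
give the principal the same expected payoff, whenever the type distribution `F` is a
Borel probability measure on `S` that is absolutely continuous with respect to Lebesgue
measure. -/
theorem stmt_5 {n : ℕ} (b : EuclideanSpace ℝ (Fin n) → ℝ)
    (hbconc : StrictConcaveOn ℝ Set.univ b)
    (hbdiff : Differentiable ℝ b)
    (K : NNReal) (hblip : LipschitzWith K (gradient b))
    (hblim : Tendsto (fun a => b a / ‖a‖)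
      (cocompact (EuclideanSpace ℝ (Fin n))) atBot)
    (S : Set (EuclideanSpace ℝ (Fin n)))
    (hScpt : IsCompact S) (hSconv : Convex ℝ S) (hSne : S.Nonempty)
    (g : EuclideanSpace ℝ (Fin n) → EuclideanSpace ℝ (Fin n)) (hg : ContinuousOn g S)
    (κ : ℝ) (hκ : 0 < κ)
    (m m' : EuclideanSpace ℝ (Fin n) → Measure (EuclideanSpace ℝ (Fin n)))
    (hm : IsMechanism b S m) (hIC : IncentiveCompatible b S m)
    (hm' : IsMechanism b S m') (hIC' : IncentiveCompatible b S m')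
    (hsameU : indirectUtility b S m = indirectUtility b S m')
    (F : Measure (EuclideanSpace ℝ (Fin n)))
    (hFprob : IsProbabilityMeasure F) (hFS : F Sᶜ = 0)
    (hFac : F ≪ MeasureTheory.volume) :
    (∫ s in S, (∫ a, (⟪a, g s⟫ + κ * b a) ∂(m s)) ∂F)
      = ∫ s in S, (∫ a, (⟪a, g s⟫ + κ * b a) ∂(m' s)) ∂F :=
  stmt_5_general b S hSconv g κ m m' hm hIC hm' hIC' hsameU F hFac
end
end

section
/- (Sufficiency in the characterization of optimal mechanisms.) Let X ⊆ ℝⁿ be compact, let μ be a finite signed Borel measure on X with total variation measure |μ|, let h : X → ℝ be continuous and convex, and let U : X → ℝ be continuous and convex with U ≤ h on X. Suppose there exist measurable families s ↦ κ_s of finite signed Borel measures on X and s ↦ δ_s of finite nonnegative Borel measures on X such that: (a) for every continuous c : X → ℝ, ∫ c dμ = ∫ (∫ c dκ_s) d|μ|(s); (b) for |μ|-almost every s, δ_s is either the zero measure or a nonnegative multiple of a Dirac mass at some point x ∈ X with U(x) = h(x); (c) for |μ|-almost every s and every continuous convex c : X → ℝ, ∫ c dκ_s ≤ ∫ c dδ_s;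 and (d) for |μ|-almost every s, ∫ U dκ_s = ∫ U dδ_s. Then U maximizes ∫ V dμ over all continuous convex V : X → ℝ with V ≤ h. -/
open MeasureTheory

/-- Sufficiency in the characterization of optimal mechanisms: Let
`X ⊆ ℝⁿ` be compact, `μ = μp − μm` a finite signed Borel measure on `X` given by its
Jordan decomposition (so `μp ⟂ μm` and the total variation is `|μ| = μp + μm`), `h`
continuous and convex on `X`, and `U` continuous and convex with `U ≤ h` on `X`.
Suppose there are measurable families `s ↦ κ_s = κp_s − κm_s` of finite signed Borel
measures and `s ↦ δ_s` of finite nonnegative Borel measures on `X` such that: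
(a) `∫ c dμ = ∫ (∫ c dκ_s) d|μ|(s)` for every continuous `c : X → ℝ`;
(b) for `|μ|`-a.e. `s`, `δ_s` is zero or a nonnegative multiple of a Dirac mass at some
    `x ∈ X` with `U x = h x`;
(c) for `|μ|`-a.e. `s`, `∫ c dκ_s ≤ ∫ c dδ_s` for every continuous convex `c`;
(d) for `|μ|`-a.e. `s`, `∫ U dκ_s = ∫ U dδ_s`.
Then `U` maximizes `∫ V dμ` over all continuous convex `V : X → ℝ` with `V ≤ h`. -/
theorem stmt_8 {n : ℕ} (X : Set (EuclideanSpace ℝ (Fin n))) (hX : IsCompact X)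
    (μp μm : Measure (EuclideanSpace ℝ (Fin n)))
    (hμp : IsFiniteMeasure μp) (hμm : IsFiniteMeasure μm)
    (hsing : μp.MutuallySingular μm)
    (h : EuclideanSpace ℝ (Fin n) → ℝ)
    (hhc : ContinuousOn h X) (hhconv : ConvexOn ℝ X h)
    (U : EuclideanSpace ℝ (Fin n) → ℝ)
    (hUc : ContinuousOn U X) (hUconv : ConvexOn ℝ X U)
    (hUh : ∀ s ∈ X, U s ≤ h s)
    (κp κm δ : EuclideanSpace ℝ (Fin n) → Measure (EuclideanSpace ℝ (Fin n)))
    (hker : ∀ A : Set (EuclideanSpace ℝ (Fin n)), MeasurableSet A →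
      (Measurable fun s => κp s A) ∧ (Measurable fun s => κm s A) ∧
      (Measurable fun s => δ s A))
    (hfin : ∀ s, IsFiniteMeasure (κp s) ∧ IsFiniteMeasure (κm s) ∧ IsFiniteMeasure (δ s))
    (ha : ∀ c : EuclideanSpace ℝ (Fin n) → ℝ, ContinuousOn c X →
      (∫ s in X, c s ∂μp) - (∫ s in X, c s ∂μm)
        = ∫ s in X, ((∫ x in X, c x ∂(κp s)) - (∫ x in X, c x ∂(κm s))) ∂(μp + μm))
    (hb : ∀ᵐ s ∂((μp + μm).restrict X),
      δ s = 0 ∨ ∃ r : NNReal, ∃ x ∈ X, U x = h x ∧ δ s = r • Measure.dirac x)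
    (hc : ∀ᵐ s ∂((μp + μm).restrict X),
      ∀ c : EuclideanSpace ℝ (Fin n) → ℝ, ContinuousOn c X → ConvexOn ℝ X c →
        (∫ x in X, c x ∂(κp s)) - (∫ x in X, c x ∂(κm s)) ≤ ∫ x in X, c x ∂(δ s))
    (hd : ∀ᵐ s ∂((μp + μm).restrict X),
      (∫ x in X, U x ∂(κp s)) - (∫ x in X, U x ∂(κm s)) = ∫ x in X, U x ∂(δ s)) :
    ∀ V : EuclideanSpace ℝ (Fin n) → ℝ,
      ContinuousOn V X → ConvexOn ℝ X V → (∀ s ∈ X, V s ≤ h s) →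
      (∫ s in X, V s ∂μp) - (∫ s in X, V s ∂μm)
        ≤ (∫ s in X, U s ∂μp) - (∫ s in X, U s ∂μm) := by
  intro V hVc hVconv hVh
  classical
  haveI := hμp; haveI := hμm
  have hXm : MeasurableSet X := hX.isClosed.measurableSet
  have key := ha (fun x => V x - U x) (hVc.sub hUc)
  -- split LHS
  have hVμp : IntegrableOn V X μp := hVc.integrableOn_compact hX
  have hUμp : IntegrableOn U X μp := hUc.integrableOn_compact hX
  have hVμm : IntegrableOn V X μm := hVc.integrableOn_compact hX
  have hUμm : IntegrableOn U X μm := hUc.integrableOn_compact hX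
  rw [integral_sub hVμp hUμp, integral_sub hVμm hUμm] at key
  -- a.e. pointwise bound on the integrand
  have hae : ∀ᵐ s ∂((μp + μm).restrict X),
      (fun s => (∫ x in X, (V x - U x) ∂(κp s)) - (∫ x in X, (V x - U x) ∂(κm s))) s ≤ 0 := by
    filter_upwards [hb, hc, hd] with s hbs hcs hds
    haveI := (hfin s).1; haveI := (hfin s).2.1; haveI := (hfin s).2.2
    have hVp : IntegrableOn V X (κp s) := hVc.integrableOn_compact hX
    have hUp : IntegrableOn U X (κp s) := hUc.integrableOn_compact hX
    have hVm : IntegrableOn V X (κm s) := hVc.integrableOn_compact hX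
    have hUm : IntegrableOn U X (κm s) := hUc.integrableOn_compact hX
    simp only [integral_sub hVp hUp, integral_sub hVm hUm]
    have h1 : (∫ x in X, V x ∂(κp s)) - (∫ x in X, V x ∂(κm s)) ≤ ∫ x in X, V x ∂(δ s) :=
      hcs V hVc hVconv
    have h2 : (∫ x in X, U x ∂(κp s)) - (∫ x in X, U x ∂(κm s)) = ∫ x in X, U x ∂(δ s) := hds
    have h3 : (∫ x in X, V x ∂(δ s)) - (∫ x in X, U x ∂(δ s)) ≤ 0 := by
      rcases hbs with h0 | ⟨r, x0, hx0, hUx0, hδ⟩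
      · simp [h0]
      · rw [hδ]
        have e1 : ∀ f : EuclideanSpace ℝ (Fin n) → ℝ,
            ∫ x in X, f x ∂((r : NNReal) • Measure.dirac x0) = (r : ℝ) * f x0 := by
          intro f
          have hsm : (r • Measure.dirac x0 : Measure _) = ((r : ENNReal)) • Measure.dirac x0 :=
            by rw [← smul_one_smul ENNReal r (Measure.dirac x0)]; congr 1; simp [ENNReal.smul_def]
          rw [hsm, Measure.restrict_smul, integral_smul_measure]
          have := setIntegral_dirac f x0 X
          rw [this, if_pos hx0]
          simp
        rw [e1 V, e1 U]
        have : V x0 ≤ U x0 := by rw [hUx0]; exact hVh x0 hx0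
        nlinarith [r.coe_nonneg]
    linarith
  beta_reduce at key
  have hfinal : (∫ s in X, ((∫ x in X, (V x - U x) ∂(κp s)) - (∫ x in X, (V x - U x) ∂(κm s))) ∂(μp + μm)) ≤ 0 :=
    integral_nonpos_of_ae hae
  linarith
end

section
/- (Reduction to a compact domain.) Assume the delegation model: S ⊆ ℝⁿ compact and convex, b : ℝⁿ → ℝ strictly concave, differentiable with Lipschitz-continuous gradient and b(a)/‖a‖ → −∞, h(s) = sup_{a∈ℝⁿ}(⟪a,s⟫ + b(a)), g : S → ℝⁿ continuous, κ > 0, and F a Borel probability measure on S with continuous density. For a convex U (which is differentiable Lebesgue-almost everywhere) define the principal's objective J(U) = ∫_S (⟪∇U(s), g(s) − κ·s⟫ + κ·U(s)) dF(s). Then there exists a compact set X ⊆ ℝⁿ with S ⊆ X such that sup { J(U) : U : ℝⁿ → ℝ convex, U(s) ≤ h(s) for all s ∈ ℝⁿ } = sup { J(U) : U : ℝⁿ → ℝ convex, U(s) ≤ h(s) for all s ∈ X }, and for every maximizer U of the second problem there is a maximizer Ũ of the first problem with Ũ = U on S. -/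
/-!
Since `F` does not charge the Lebesgue-null boundary of the convex set `S`, `J(U)` depends only
on `U` restricted to `S`. The constant `b(0)` is feasible with value `κ b(0)`, so only `U` with
`J(U) ≥ κ b(0)` matter. If moreover `U ≤ h ≤ H` on a large ball, the gradient bound
`‖∇U(s)‖ r ≤ H - U(s)` makes the integrand of `J` at most `G H / r + (κ - G / r) U(s)`, where
`G ≥ ‖g(s) - κ s‖` on `S`; for `r` large this forces `max_S U` above a constant `m`. By convexity
`U` is then `L`-Lipschitz at every point of `S`, with `m` and `L` independent of `U`. The
inf-convolution `x ↦ inf_y (U y + L ‖x - y‖)` is a convex function equal to `U` on `S`, below `U`,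
and of at most linear growth, so it lies below the superlinear `h` outside a ball `X` chosen in
advance.
-/

open MeasureTheory Filter
open scoped RealInnerProductSpace

noncomputable section

/-- The principal's objective `J(U) = ∫_S (⟪∇U(s), g(s) − κ·s⟫ + κ·U(s)) dF(s)`,
where `∇U` is the gradient of `U` (a convex function is differentiable Lebesgue-a.e.,
and the value of `gradient U` off the differentiability set does not affect `J`). -/
def principalObjective {n : ℕ} (S : Set (EuclideanSpace ℝ (Fin n)))
    (g : EuclideanSpace ℝ (Fin n) → EuclideanSpace ℝ (Fin n)) (κ : ℝ)
    (F : Measure (EuclideanSpace ℝ (Fin n)))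
    (U : EuclideanSpace ℝ (Fin n) → ℝ) : ℝ :=
  ∫ s in S, (⟪gradient U s, g s - κ • s⟫ + κ * U s) ∂F

open Set Metric

lemma Real.sSup_eq_of_subset_of_forall_le_imp_mem {A B : Set ℝ} {c : ℝ} (hAB : A ⊆ B)
    (hc : c ∈ A) (hB : ∀ z ∈ B, c ≤ z → z ∈ A) : sSup A = sSup B := by
  have hB' (z) (hz : z ∈ B) : z ≤ c ∨ z ∈ A := (le_or_gt z c).imp_right fun h => hB z hz h.le
  by_cases hbdd : BddAbove B
  · refine le_antisymm (csSup_le_csSup hbdd ⟨c, hc⟩ hAB) (csSup_le ⟨c, hAB hc⟩ fun z hz => ?_)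
    rcases hB' z hz with h | h
    · exact h.trans (le_csSup (hbdd.mono hAB) hc)
    · exact le_csSup (hbdd.mono hAB) h
  · have hA : ¬BddAbove A := fun ⟨M, hM⟩ => hbdd ⟨max M c, fun z hz => (hB' z hz).elim
      (fun h => h.trans (le_max_right _ _)) fun h => (hM h).trans (le_max_left _ _)⟩
    rw [Real.sSup_of_not_bddAbove hA, Real.sSup_of_not_bddAbove hbdd]

section ConvexOn

variable {E : Type*} [NormedAddCommGroup E] [NormedSpace ℝ E] {U : E → ℝ}

lemma ConvexOn.two_mul_sub_le_of_forall_le (hU : ConvexOn ℝ univ U) {s₀ : E} {ρ m H : ℝ}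
    (hm : m ≤ U s₀) (hH : ∀ z ∈ closedBall s₀ ρ, U z ≤ H) {x : E} (hx : x ∈ closedBall s₀ ρ) :
    2 * m - H ≤ U x := by
  have hreflect : (2 : ℝ) • s₀ - x ∈ closedBall s₀ ρ := by
    rw [mem_closedBall, dist_eq_norm] at hx ⊢
    rwa [show (2 : ℝ) • s₀ - x - s₀ = -(x - s₀) by module, norm_neg]
  have hmid := hU.2 (mem_univ x) (mem_univ ((2 : ℝ) • s₀ - x)) (by norm_num : (0 : ℝ) ≤ 1 / 2)
    (by norm_num : (0 : ℝ) ≤ 1 / 2) (by norm_num)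
  rw [show (1 / 2 : ℝ) • x + (1 / 2 : ℝ) • ((2 : ℝ) • s₀ - x) = s₀ by module,
    smul_eq_mul, smul_eq_mul] at hmid
  linarith [hH _ hreflect]

lemma ConvexOn.sub_le_mul_norm_sub (hU : ConvexOn ℝ univ U) {x : E} {M : ℝ}
    (hM : ∀ z ∈ sphere x 1, U z ≤ U x + M) (y : E) : U x - U y ≤ M * ‖x - y‖ := by
  rcases eq_or_ne x y with rfl | hxy
  · simp
  set d := ‖x - y‖
  have hd : 0 < d := norm_pos_iff.mpr (sub_ne_zero.mpr hxy)
  set z := x + d⁻¹ • (x - y)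
  have hz : z ∈ sphere x 1 := by
    rw [mem_sphere, dist_eq_norm, add_sub_cancel_left, norm_smul_of_nonneg (by positivity),
      inv_mul_cancel₀ hd.ne']
  -- `x` lies on the segment from `y` to `z`, at distance `d` from `y` and `1` from `z`
  have hcomb : (1 / (d + 1)) • y + (d / (d + 1)) • z = x := by
    match_scalars <;> field_simp
    ring
  have hconv := hU.2 (mem_univ y) (mem_univ z) (by positivity : (0 : ℝ) ≤ 1 / (d + 1))
    (by positivity : (0 : ℝ) ≤ d / (d + 1)) (by field_simp; ring)
  rw [hcomb, smul_eq_mul, smul_eq_mul] at hconv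
  field_simp at hconv
  nlinarith [hM z hz]

lemma ConvexOn.sub_le_mul_norm_sub_of_le_of_forall_le (hU : ConvexOn ℝ univ U) {s₀ x : E}
    {ρ m H : ℝ} (hm : m ≤ U s₀) (hH : ∀ z ∈ closedBall s₀ (ρ + 1), U z ≤ H)
    (hx : dist x s₀ ≤ ρ) (y : E) : U x - U y ≤ 2 * (H - m) * ‖x - y‖ := by
  refine hU.sub_le_mul_norm_sub (fun z hz => ?_) y
  have hzx : dist z x = 1 := hz
  have hxball : x ∈ closedBall s₀ (ρ + 1) := mem_closedBall.mpr (by linarith)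
  have hzball : z ∈ closedBall s₀ (ρ + 1) :=
    mem_closedBall.mpr (by linarith [dist_triangle z x s₀])
  linarith [hU.two_mul_sub_le_of_forall_le hm hH hxball, hH z hzball]

end ConvexOn

section Gradient

variable {E : Type*} [NormedAddCommGroup E] [InnerProductSpace ℝ E] [CompleteSpace E]
  {U : E → ℝ}

lemma ConvexOn.inner_gradient_le_sub (hU : ConvexOn ℝ univ U) {s : E}
    (hd : DifferentiableAt ℝ U s) (v : E) : ⟪gradient U s, v⟫ ≤ U (s + v) - U s := by
  have hφconv : ConvexOn ℝ univ fun t : ℝ => U (s + t • v) := by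
    refine ⟨convex_univ, fun t₁ _ t₂ _ a b ha hb hab => ?_⟩
    convert hU.2 (mem_univ (s + t₁ • v)) (mem_univ (s + t₂ • v)) ha hb hab using 2
    linear_combination (norm := module) -hab • s
  have hφderiv : HasDerivAt (fun t : ℝ => U (s + t • v)) (fderiv ℝ U s v) 0 := by
    have hd' : HasFDerivAt U (fderiv ℝ U s) (s + (0 : ℝ) • v) := by
      simpa using hd.hasFDerivAt
    exact hd'.comp_hasDerivAt 0 (by simpa using ((hasDerivAt_id (0 : ℝ)).smul_const v).const_add s)
  have := hφconv.le_slope_of_hasDerivAt (mem_univ 0) (mem_univ 1) one_pos hφderiv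
  simpa [inner_gradient_left, slope_def_field] using this

lemma ConvexOn.norm_gradient_mul_le (hU : ConvexOn ℝ univ U) {s : E} {r H : ℝ} (hr : 0 ≤ r)
    (hH : ∀ x ∈ closedBall s r, U x ≤ H) : ‖gradient U s‖ * r ≤ H - U s := by
  have hUs : U s ≤ H := hH s (mem_closedBall_self hr)
  set w := gradient U s
  rcases eq_or_ne w 0 with hw | hw
  · simpa [hw] using hUs
  have hd : DifferentiableAt ℝ U s := by
    by_contra hd
    exact hw (gradient_eq_zero_of_not_differentiableAt hd)
  have hwpos : 0 < ‖w‖ := norm_pos_iff.mpr hw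
  have hv : s + (r / ‖w‖) • w ∈ closedBall s r := by
    rw [mem_closedBall, dist_eq_norm, add_sub_cancel_left, norm_smul_of_nonneg (by positivity),
      div_mul_cancel₀ _ hwpos.ne']
  have htangent := hU.inner_gradient_le_sub hd ((r / ‖w‖) • w)
  rw [real_inner_smul_right, real_inner_self_eq_norm_sq] at htangent
  have hinner : r / ‖w‖ * ‖w‖ ^ 2 = ‖w‖ * r := by field_simp
  linarith [hH _ hv]

end Gradient

section LipschitzEnvelope

variable {E : Type*} [NormedAddCommGroup E] {U : E → ℝ} {L : ℝ}

def lipschitzEnvelope (U : E → ℝ) (L : ℝ) (x : E) : ℝ :=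
  ⨅ y, U y + L * ‖x - y‖

lemma bddBelow_range_add_mul_norm_sub (hL : 0 ≤ L) {x₀ : E}
    (hx₀ : ∀ y, U x₀ - U y ≤ L * ‖x₀ - y‖) (x : E) :
    BddBelow (range fun y => U y + L * ‖x - y‖) := by
  refine ⟨U x₀ - L * ‖x₀ - x‖, ?_⟩
  rintro _ ⟨y, rfl⟩
  have htriangle : ‖x₀ - y‖ ≤ ‖x₀ - x‖ + ‖x - y‖ := norm_sub_le_norm_sub_add_norm_sub _ _ _
  nlinarith [hx₀ y]

lemma lipschitzEnvelope_le (hL : 0 ≤ L) {x₀ : E} (hx₀ : ∀ y, U x₀ - U y ≤ L * ‖x₀ - y‖)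
    (x y : E) : lipschitzEnvelope U L x ≤ U y + L * ‖x - y‖ :=
  ciInf_le (bddBelow_range_add_mul_norm_sub hL hx₀ x) y

lemma lipschitzEnvelope_eq (hL : 0 ≤ L) {x : E} (hx : ∀ y, U x - U y ≤ L * ‖x - y‖) :
    lipschitzEnvelope U L x = U x :=
  le_antisymm (by simpa using lipschitzEnvelope_le hL hx x x)
    (le_ciInf fun y => by linarith [hx y])

lemma ConvexOn.lipschitzEnvelope [NormedSpace ℝ E] (hU : ConvexOn ℝ univ U) (hL : 0 ≤ L) {x₀ : E}
    (hx₀ : ∀ y, U x₀ - U y ≤ L * ‖x₀ - y‖) : ConvexOn ℝ univ (lipschitzEnvelope U L) := by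
  refine ⟨convex_univ, fun x₁ _ x₂ _ p q hp hq hpq => ?_⟩
  simp only [smul_eq_mul, _root_.lipschitzEnvelope, Real.mul_iInf_of_nonneg hp,
    Real.mul_iInf_of_nonneg hq]
  refine le_ciInf_add_ciInf fun y₁ y₂ => ?_
  have hnorm : ‖p • x₁ + q • x₂ - (p • y₁ + q • y₂)‖ ≤ p * ‖x₁ - y₁‖ + q * ‖x₂ - y₂‖ := by
    rw [show p • x₁ + q • x₂ - (p • y₁ + q • y₂) = p • (x₁ - y₁) + q • (x₂ - y₂) by module,
      ← norm_smul_of_nonneg hp, ← norm_smul_of_nonneg hq]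
    exact norm_add_le _ _
  have hUconv : U (p • y₁ + q • y₂) ≤ p * U y₁ + q * U y₂ :=
    hU.2 (mem_univ _) (mem_univ _) hp hq hpq
  calc ⨅ y, U y + L * ‖p • x₁ + q • x₂ - y‖
      ≤ U (p • y₁ + q • y₂) + L * ‖p • x₁ + q • x₂ - (p • y₁ + q • y₂)‖ :=
        ciInf_le (bddBelow_range_add_mul_norm_sub hL hx₀ _) _
    _ ≤ p * U y₁ + q * U y₂ + L * (p * ‖x₁ - y₁‖ + q * ‖x₂ - y₂‖) := by gcongr
    _ = p * (U y₁ + L * ‖x₁ - y₁‖) + q * (U y₂ + L * ‖x₂ - y₂‖) := by ring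

lemma ConvexOn.exists_convexOn_eqOn_le_add_mul_norm [NormedSpace ℝ E] (hU : ConvexOn ℝ univ U)
    (hL : 0 ≤ L) {S : Set E} (hlip : ∀ x ∈ S, ∀ y, U x - U y ≤ L * ‖x - y‖) {s₀ : E}
    (hs₀ : s₀ ∈ S) :
    ∃ Ut, ConvexOn ℝ univ Ut ∧ EqOn Ut U S ∧ (∀ x, Ut x ≤ U x) ∧
      ∀ x, Ut x ≤ U s₀ + L * ‖x - s₀‖ :=
  ⟨_root_.lipschitzEnvelope U L, hU.lipschitzEnvelope hL (hlip s₀ hs₀),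
    fun x hx => lipschitzEnvelope_eq hL (hlip x hx),
    fun x => by simpa using lipschitzEnvelope_le hL (hlip s₀ hs₀) x x,
    fun x => lipschitzEnvelope_le hL (hlip s₀ hs₀) x s₀⟩

end LipschitzEnvelope

lemma exists_forall_inner_add_le {E : Type*} [NormedAddCommGroup E] [InnerProductSpace ℝ E]
    {b : E → ℝ} (hb : Continuous b) (hblim : Tendsto (fun a => b a / ‖a‖) (cocompact E) atBot)
    (ρ : ℝ) : ∃ H, ∀ s, ‖s‖ ≤ ρ → ∀ a, ⟪a, s⟫ + b a ≤ H := by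
  obtain ⟨K, hK, hKb⟩ := mem_cocompact.mp (hblim.eventually (eventually_le_atBot (-(ρ + 1))))
  obtain ⟨C, hC⟩ := ((hK.union isCompact_singleton).image_of_continuousOn
    ((continuous_norm.mul continuous_const).add hb).continuousOn).bddAbove
  refine ⟨max C 0, fun s hs a => ?_⟩
  have hinner : ⟪a, s⟫ ≤ ‖a‖ * ρ :=
    (real_inner_le_norm a s).trans (mul_le_mul_of_nonneg_left hs (norm_nonneg a))
  by_cases ha : a ∈ K ∪ {0}
  · have : ‖a‖ * ρ + b a ≤ C := hC (mem_image_of_mem _ ha)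
    linarith [le_max_left C 0]
  · -- far from the origin, `b a ≤ -(ρ + 1) ‖a‖` beats the linear term
    have hpos : 0 < ‖a‖ := norm_pos_iff.mpr fun h => ha (Or.inr h)
    have hb : b a ≤ -(ρ + 1) * ‖a‖ := (div_le_iff₀ hpos).mp (hKb fun h => ha (Or.inl h))
    nlinarith [le_max_right C 0]

section Euclidean

variable {n : ℕ}

section FirstBest

variable {b : EuclideanSpace ℝ (Fin n) → ℝ}

lemma le_firstBest (hb : Continuous b)
    (hblim : Tendsto (fun a => b a / ‖a‖) (cocompact (EuclideanSpace ℝ (Fin n))) atBot)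
    (a s : EuclideanSpace ℝ (Fin n)) : ⟪a, s⟫ + b a ≤ firstBest b s := by
  obtain ⟨H, hH⟩ := exists_forall_inner_add_le hb hblim ‖s‖
  exact le_csSup ⟨H, by rintro _ ⟨a, rfl⟩; exact hH s le_rfl a⟩ ⟨a, rfl⟩

lemma exists_firstBest_le (hb : Continuous b)
    (hblim : Tendsto (fun a => b a / ‖a‖) (cocompact (EuclideanSpace ℝ (Fin n))) atBot) (ρ : ℝ) :
    ∃ H, 0 ≤ H ∧ ∀ s : EuclideanSpace ℝ (Fin n), ‖s‖ ≤ ρ → firstBest b s ≤ H := by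
  obtain ⟨H, hH⟩ := exists_forall_inner_add_le hb hblim ρ
  refine ⟨max H 0, le_max_right _ _, fun s hs => csSup_le (range_nonempty _) ?_⟩
  rintro _ ⟨a, rfl⟩
  exact (hH s hs a).trans (le_max_left _ _)

lemma exists_add_mul_norm_le_firstBest (hb : Continuous b)
    (hblim : Tendsto (fun a => b a / ‖a‖) (cocompact (EuclideanSpace ℝ (Fin n))) atBot) (c : ℝ)
    {L : ℝ} (hL : 0 ≤ L) :
    ∃ R, ∀ x : EuclideanSpace ℝ (Fin n), R ≤ ‖x‖ → c + L * ‖x‖ ≤ firstBest b x := by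
  obtain ⟨m, hm⟩ :=
    (isCompact_closedBall (0 : EuclideanSpace ℝ (Fin n)) (L + 1)).bddBelow_image hb.continuousOn
  refine ⟨max (c - m) 1, fun x hx => ?_⟩
  have hxpos : 0 < ‖x‖ := lt_of_lt_of_le one_pos (le_of_max_le_right hx)
  -- test the supremum defining `firstBest b x` with `a = (L + 1) x / ‖x‖`
  set a : EuclideanSpace ℝ (Fin n) := ((L + 1) / ‖x‖) • x
  have hax : ⟪a, x⟫ = (L + 1) * ‖x‖ := by
    rw [real_inner_smul_left, real_inner_self_eq_norm_sq]
    field_simp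
  have ha : a ∈ closedBall 0 (L + 1) := by
    rw [mem_closedBall_zero_iff, norm_smul_of_nonneg (by positivity), div_mul_cancel₀ _ hxpos.ne']
  linarith [le_firstBest hb hblim a x, hm (mem_image_of_mem b ha), le_of_max_le_left hx]

end FirstBest

section Objective

variable {S : Set (EuclideanSpace ℝ (Fin n))}
  {g : EuclideanSpace ℝ (Fin n) → EuclideanSpace ℝ (Fin n)} {κ : ℝ}
  {F : Measure (EuclideanSpace ℝ (Fin n))} {U V : EuclideanSpace ℝ (Fin n) → ℝ}

lemma principalObjective_congr (hF : F (frontier S) = 0) (hUV : EqOn U V S) :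
    principalObjective S g κ F U = principalObjective S g κ F V := by
  have hinterior : ∀ᵐ x ∂F.restrict S, x ∈ interior S := by
    change F.restrict S (interior S)ᶜ = 0
    rw [Measure.restrict_apply isOpen_interior.measurableSet.compl]
    exact measure_mono_null (fun x hx => show x ∈ frontier S from ⟨subset_closure hx.2, hx.1⟩) hF
  refine integral_congr_ae (hinterior.mono fun x hx => ?_)
  have hUV_near : U =ᶠ[_] V := eventuallyEq_of_mem (mem_interior_iff_mem_nhds.mp hx) hUV
  simp only [hUV_near.gradient_eq, hUV (interior_subset hx)]

lemma principalObjective_const (c : ℝ) :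
    principalObjective S g κ F (fun _ => c) = F.real S * (κ * c) := by
  simp [principalObjective]

lemma integrableOn_principalIntegrand [IsFiniteMeasure F] (hS : IsCompact S)
    (hg : ContinuousOn g S) (hU : Continuous U) {C : ℝ} (hC : ∀ s ∈ S, ‖gradient U s‖ ≤ C) :
    IntegrableOn (fun s => ⟪gradient U s, g s - κ • s⟫ + κ * U s) S F := by
  have hSm := hS.isClosed.measurableSet
  have hw : ContinuousOn (fun s => g s - κ • s) S := hg.sub (continuous_const_smul κ).continuousOn
  obtain ⟨G, hG⟩ := hS.exists_bound_of_continuousOn hw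
  obtain ⟨M, hM⟩ := hS.exists_bound_of_continuousOn hU.continuousOn
  have hgradient : Measurable (gradient U) :=
    (InnerProductSpace.toDual ℝ _).symm.continuous.measurable.comp (measurable_fderiv ℝ U)
  refine Integrable.of_bound
    ((hgradient.aestronglyMeasurable.inner (hw.aestronglyMeasurable hSm)).add
      (hU.const_mul κ).aestronglyMeasurable) (C * G + ‖κ‖ * M)
    (ae_restrict_of_forall_mem hSm fun s hs => ?_)
  have hC0 : 0 ≤ C := (norm_nonneg _).trans (hC s hs)
  calc ‖⟪gradient U s, g s - κ • s⟫ + κ * U s‖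
      ≤ ‖gradient U s‖ * ‖g s - κ • s‖ + ‖κ‖ * ‖U s‖ :=
        (norm_add_le _ _).trans (by rw [norm_mul]; gcongr; exact norm_inner_le_norm _ _)
    _ ≤ C * G + ‖κ‖ * M := by gcongr; exacts [hC s hs, hG s hs, hM s hs]

lemma principalObjective_le [IsFiniteMeasure F] (hS : IsCompact S) (hg : ContinuousOn g S)
    (hU : ConvexOn ℝ univ U) {G r H m : ℝ} (hr : 0 < r) (hGr : G / r ≤ κ)
    (hG : ∀ s ∈ S, ‖g s - κ • s‖ ≤ G) (hH : ∀ s ∈ S, ∀ x ∈ closedBall s r, U x ≤ H)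
    (hm : ∀ s ∈ S, U s ≤ m) :
    principalObjective S g κ F U ≤ F.real S * (G * H / r + (κ - G / r) * m) := by
  have hUc : Continuous U := continuousOn_univ.mp (hU.continuousOn isOpen_univ)
  have hgradient (s) (hs : s ∈ S) : ‖gradient U s‖ ≤ (H - U s) / r :=
    (le_div_iff₀ hr).mpr (hU.norm_gradient_mul_le hr.le (hH s hs))
  obtain ⟨M, hM⟩ := hS.bddBelow_image hUc.continuousOn
  have hintegrable := integrableOn_principalIntegrand (κ := κ) (F := F) hS hg hUc
    (C := (H - M) / r) fun s hs => (hgradient s hs).trans (by gcongr; exact hM ⟨s, hs, rfl⟩)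
  calc principalObjective S g κ F U ≤ ∫ _ in S, (G * H / r + (κ - G / r) * m) ∂F := by
        refine setIntegral_mono_on hintegrable (integrableOn_const (measure_ne_top F S))
          hS.isClosed.measurableSet fun s hs => ?_
        have hG0 : 0 ≤ G := (norm_nonneg _).trans (hG s hs)
        have hinner : ⟪gradient U s, g s - κ • s⟫ ≤ (H - U s) / r * G :=
          (real_inner_le_norm _ _).trans (mul_le_mul (hgradient s hs) (hG s hs) (norm_nonneg _)
            ((norm_nonneg _).trans (hgradient s hs)))
        have hU_le : (κ - G / r) * U s ≤ (κ - G / r) * m :=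
          mul_le_mul_of_nonneg_left (hm s hs) (by linarith)
        have hsplit : (H - U s) / r * G + κ * U s = G * H / r + (κ - G / r) * U s := by
          field_simp
          ring
        linarith
    _ = F.real S * (G * H / r + (κ - G / r) * m) := by rw [setIntegral_const, smul_eq_mul]

lemma exists_le_of_le_principalObjective [IsFiniteMeasure F] (hS : IsCompact S)
    (hSne : S.Nonempty) (hg : ContinuousOn g S) (hκ : 0 < κ) (hFS : F.real S = 1)
    (hU : ConvexOn ℝ univ U) {G r H c : ℝ} (hr : 0 < r) (hGr : G / r ≤ κ / 2)
    (hG : ∀ s ∈ S, ‖g s - κ • s‖ ≤ G) (hH : ∀ s ∈ S, ∀ x ∈ closedBall s r, U x ≤ H)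
    (hc : c ≤ principalObjective S g κ F U) :
    ∃ s₀ ∈ S, min 0 (2 * (c - G * H / r) / κ) ≤ U s₀ := by
  obtain ⟨s₀, hs₀, hmax⟩ :=
    hS.exists_isMaxOn hSne (continuousOn_univ.mp (hU.continuousOn isOpen_univ)).continuousOn
  refine ⟨s₀, hs₀, ?_⟩
  have hJ := principalObjective_le (F := F) hS hg hU hr (by linarith) hG hH fun s hs => hmax hs
  rw [hFS, one_mul] at hJ
  rcases le_or_gt 0 (U s₀) with h0 | h0
  · exact (min_le_left _ _).trans h0
  · refine (min_le_right _ _).trans ((div_le_iff₀ hκ).mpr ?_)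
    nlinarith

end Objective

theorem exists_extension_of_le_principalObjective {b : EuclideanSpace ℝ (Fin n) → ℝ}
    (hb : Continuous b)
    (hblim : Tendsto (fun a => b a / ‖a‖) (cocompact (EuclideanSpace ℝ (Fin n))) atBot)
    {S : Set (EuclideanSpace ℝ (Fin n))} (hS : IsCompact S) (hSne : S.Nonempty)
    {g : EuclideanSpace ℝ (Fin n) → EuclideanSpace ℝ (Fin n)} (hg : ContinuousOn g S)
    {κ : ℝ} (hκ : 0 < κ) {F : Measure (EuclideanSpace ℝ (Fin n))} [IsFiniteMeasure F]
    (hFS : F.real S = 1) (c : ℝ) :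
    ∃ X, IsCompact X ∧ S ⊆ X ∧ ∀ U, ConvexOn ℝ univ U → (∀ s ∈ X, U s ≤ firstBest b s) →
      c ≤ principalObjective S g κ F U →
      ∃ Ut, ConvexOn ℝ univ Ut ∧ (∀ s, Ut s ≤ firstBest b s) ∧ EqOn Ut U S := by
  obtain ⟨D, hD⟩ := hS.isBounded.exists_norm_le
  obtain ⟨G, hG⟩ : ∃ G, ∀ s ∈ S, ‖g s - κ • s‖ ≤ G := hS.exists_bound_of_continuousOn
    (hg.sub (continuous_const_smul κ).continuousOn)
  have hD0 : 0 ≤ D := (norm_nonneg _).trans (hD _ hSne.some_mem)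
  set r := max (2 * D + 1) (2 * G / κ)
  have hDr : 2 * D + 1 ≤ r := le_max_left _ _
  have hr : 0 < r := by linarith
  have hGr : G / r ≤ κ / 2 := by
    rw [div_le_iff₀ hr]
    linarith [(div_le_iff₀ hκ).mp (le_max_right (2 * D + 1) (2 * G / κ))]
  obtain ⟨H, hH0, hH⟩ := exists_firstBest_le hb hblim (D + r)
  -- `m` bounds `max_S U` from below and `L` is a Lipschitz constant of `U` at points of `S`,
  -- for every `U` in question
  set m := min 0 (2 * (c - G * H / r) / κ)
  set L := 2 * (H - m)
  have hL : 0 ≤ L := by linarith [min_le_left 0 (2 * (c - G * H / r) / κ)]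
  obtain ⟨R, hR⟩ := exists_add_mul_norm_le_firstBest hb hblim (H + L * D) hL
  refine ⟨closedBall 0 (max R (D + r)), isCompact_closedBall _ _, fun s hs =>
    mem_closedBall_zero_iff.mpr ((hD s hs).trans (le_max_of_le_right (by linarith))), ?_⟩
  intro U hU hUX hc
  have hUH (x) (hx : ‖x‖ ≤ D + r) : U x ≤ H :=
    (hUX x (mem_closedBall_zero_iff.mpr (hx.trans (le_max_right _ _)))).trans (hH x hx)
  obtain ⟨s₀, hs₀, hm⟩ := exists_le_of_le_principalObjective hS hSne hg hκ hFS hU hr hGr hG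
    (fun s hs x hx => hUH x (by linarith [norm_le_of_mem_closedBall hx, hD s hs])) hc
  have hlip : ∀ x ∈ S, ∀ y, U x - U y ≤ L * ‖x - y‖ := fun x hx =>
    hU.sub_le_mul_norm_sub_of_le_of_forall_le (ρ := 2 * D) hm
      (fun z hz => hUH z (by linarith [norm_le_of_mem_closedBall hz, hD s₀ hs₀]))
      (by linarith [dist_le_norm_add_norm x s₀, hD x hx, hD s₀ hs₀])
  obtain ⟨Ut, hUt, hUtU, hUt_le, hUt_growth⟩ := hU.exists_convexOn_eqOn_le_add_mul_norm hL hlip hs₀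
  refine ⟨Ut, hUt, fun x => ?_, hUtU⟩
  by_cases hx : ‖x‖ ≤ max R (D + r)
  · exact (hUt_le x).trans (hUX x (mem_closedBall_zero_iff.mpr hx))
  · have hUs₀ : U s₀ ≤ H := hUH s₀ (by linarith [hD s₀ hs₀])
    have hdist : ‖x - s₀‖ ≤ ‖x‖ + D := by linarith [norm_sub_le x s₀, hD s₀ hs₀]
    calc Ut x ≤ U s₀ + L * ‖x - s₀‖ := hUt_growth x
      _ ≤ H + L * D + L * ‖x‖ := by nlinarith
      _ ≤ firstBest b x := hR x (le_of_max_le_left (not_le.mp hx).le)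

end Euclidean

theorem stmt_9_general {n : ℕ} (b : EuclideanSpace ℝ (Fin n) → ℝ)
    (hbdiff : Differentiable ℝ b)
    (hblim : Tendsto (fun a => b a / ‖a‖)
      (cocompact (EuclideanSpace ℝ (Fin n))) atBot)
    (S : Set (EuclideanSpace ℝ (Fin n)))
    (hScpt : IsCompact S) (hSconv : Convex ℝ S) (hSne : S.Nonempty)
    (g : EuclideanSpace ℝ (Fin n) → EuclideanSpace ℝ (Fin n)) (hg : ContinuousOn g S)
    (κ : ℝ) (hκ : 0 < κ)
    (f : EuclideanSpace ℝ (Fin n) → ℝ)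
    (F : Measure (EuclideanSpace ℝ (Fin n)))
    (hF : F = (volume.restrict S).withDensity (fun s => ENNReal.ofReal (f s)))
    (hFprob : IsProbabilityMeasure F) :
    ∃ X : Set (EuclideanSpace ℝ (Fin n)), IsCompact X ∧ S ⊆ X ∧
      sSup (principalObjective S g κ F ''
          {U | ConvexOn ℝ Set.univ U ∧ ∀ s, U s ≤ firstBest b s})
        = sSup (principalObjective S g κ F ''
          {U | ConvexOn ℝ Set.univ U ∧ ∀ s ∈ X, U s ≤ firstBest b s}) ∧
      ∀ U : EuclideanSpace ℝ (Fin n) → ℝ,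
        ConvexOn ℝ Set.univ U → (∀ s ∈ X, U s ≤ firstBest b s) →
        (∀ V : EuclideanSpace ℝ (Fin n) → ℝ,
          ConvexOn ℝ Set.univ V → (∀ s ∈ X, V s ≤ firstBest b s) →
          principalObjective S g κ F V ≤ principalObjective S g κ F U) →
        ∃ Ut : EuclideanSpace ℝ (Fin n) → ℝ,
          ConvexOn ℝ Set.univ Ut ∧ (∀ s, Ut s ≤ firstBest b s) ∧
          (∀ V : EuclideanSpace ℝ (Fin n) → ℝ,
            ConvexOn ℝ Set.univ V → (∀ s, V s ≤ firstBest b s) →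
            principalObjective S g κ F V ≤ principalObjective S g κ F Ut) ∧
          ∀ s ∈ S, Ut s = U s := by
  have hF_ac : F ≪ volume.restrict S := hF ▸ withDensity_absolutelyContinuous _ _
  have hfrontier : F (frontier S) = 0 :=
    hF_ac.trans (Measure.absolutelyContinuous_of_le Measure.restrict_le_self)
      (hSconv.addHaar_frontier volume)
  have hSm := hScpt.isClosed.measurableSet
  have hFS : F.real S = 1 := by
    rw [measureReal_def, (prob_compl_eq_zero_iff hSm).mp (hF_ac (by
      rw [Measure.restrict_apply hSm.compl, compl_inter_self, measure_empty])), ENNReal.toReal_one]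
  have hb0 (s) : b 0 ≤ firstBest b s := by
    simpa using le_firstBest hbdiff.continuous hblim 0 s
  have hJb0 : principalObjective S g κ F (fun _ => b 0) = κ * b 0 := by
    rw [principalObjective_const, hFS, one_mul]
  obtain ⟨X, hX, hSX, hext⟩ := exists_extension_of_le_principalObjective hbdiff.continuous hblim
    hScpt hSne hg hκ hFS (κ * b 0)
  refine ⟨X, hX, hSX, Real.sSup_eq_of_subset_of_forall_le_imp_mem
    (image_mono fun U hU => ⟨hU.1, fun s _ => hU.2 s⟩)
    ⟨_, ⟨convexOn_const _ convex_univ, hb0⟩, hJb0⟩ ?_, ?_⟩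
  · rintro _ ⟨U, ⟨hU, hUX⟩, rfl⟩ hc
    obtain ⟨Ut, hUt, hUth, hUtU⟩ := hext U hU hUX hc
    exact ⟨Ut, ⟨hUt, hUth⟩, principalObjective_congr hfrontier hUtU⟩
  · intro U hU hUX hmax
    obtain ⟨Ut, hUt, hUth, hUtU⟩ :=
      hext U hU hUX (hJb0 ▸ hmax _ (convexOn_const _ convex_univ) fun s _ => hb0 s)
    refine ⟨Ut, hUt, hUth, fun V hV hVh => ?_, hUtU⟩
    rw [principalObjective_congr hfrontier hUtU]
    exact hmax V hV fun s _ => hVh s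

/-- Reduction to a compact domain: in the delegation model with type
distribution `F` on `S` with continuous density, there is a compact `X ⊇ S` such that
the supremum of `J` over convex `U ≤ h` on all of ℝⁿ equals the supremum of `J` over
convex `U` with `U ≤ h` merely on `X`, and every maximizer of the relaxed problem
agrees on `S` with some maximizer of the original problem. -/
theorem stmt_9 {n : ℕ} (b : EuclideanSpace ℝ (Fin n) → ℝ)
    (hbconc : StrictConcaveOn ℝ Set.univ b)
    (hbdiff : Differentiable ℝ b)
    (K : NNReal) (hblip : LipschitzWith K (gradient b))
    (hblim : Tendsto (fun a => b a / ‖a‖)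
      (cocompact (EuclideanSpace ℝ (Fin n))) atBot)
    (S : Set (EuclideanSpace ℝ (Fin n)))
    (hScpt : IsCompact S) (hSconv : Convex ℝ S) (hSne : S.Nonempty)
    (g : EuclideanSpace ℝ (Fin n) → EuclideanSpace ℝ (Fin n)) (hg : ContinuousOn g S)
    (κ : ℝ) (hκ : 0 < κ)
    (f : EuclideanSpace ℝ (Fin n) → ℝ) (hfc : Continuous f) (hf0 : ∀ x, 0 ≤ f x)
    (F : Measure (EuclideanSpace ℝ (Fin n)))
    (hF : F = (volume.restrict S).withDensity (fun s => ENNReal.ofReal (f s)))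
    (hFprob : IsProbabilityMeasure F) :
    ∃ X : Set (EuclideanSpace ℝ (Fin n)), IsCompact X ∧ S ⊆ X ∧
      sSup (principalObjective S g κ F ''
          {U | ConvexOn ℝ Set.univ U ∧ ∀ s, U s ≤ firstBest b s})
        = sSup (principalObjective S g κ F ''
          {U | ConvexOn ℝ Set.univ U ∧ ∀ s ∈ X, U s ≤ firstBest b s}) ∧
      ∀ U : EuclideanSpace ℝ (Fin n) → ℝ,
        ConvexOn ℝ Set.univ U → (∀ s ∈ X, U s ≤ firstBest b s) →
        (∀ V : EuclideanSpace ℝ (Fin n) → ℝ,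
          ConvexOn ℝ Set.univ V → (∀ s ∈ X, V s ≤ firstBest b s) →
          principalObjective S g κ F V ≤ principalObjective S g κ F U) →
        ∃ Ut : EuclideanSpace ℝ (Fin n) → ℝ,
          ConvexOn ℝ Set.univ Ut ∧ (∀ s, Ut s ≤ firstBest b s) ∧
          (∀ V : EuclideanSpace ℝ (Fin n) → ℝ,
            ConvexOn ℝ Set.univ V → (∀ s, V s ≤ firstBest b s) →
            principalObjective S g κ F V ≤ principalObjective S g κ F Ut) ∧
          ∀ s ∈ S, Ut s = U s :=
  stmt_9_general b hbdiff hblim S hScpt hSconv hSne g hg κ hκ f F hF hFprob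
end
end
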